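/- Let 1 ≤ k ≤ 6, X a Banach space, 1 ≤ p < ∞, τ > 0, and let (e_n)_{n=0}^N ⊂ X with e_0 = ⋯ = e_{k−1} = 0. Define the BDF divided differences ė_n = (1/τ) Σ_{j=0}^k δ_j e_{n−j} for k ≤ n ≤ N. Then there is a constant C depending only on k and p (not on τ, N or X) such that (τ Σ_{n=k}^N ‖(e_n − e_{n−1})/τ‖_X^p)^{1/p} ≤ C (τ Σ_{n=k}^N ‖ė_n‖_X^p)^{1/p}. -/

import Mathlib

/-!
Write `δ(ζ) = (1 - ζ) μ(ζ)` and let polynomials act on sequences by convolution, `X` being the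
right shift. Then the BDF difference `∑ⱼ δⱼ e_{n-j}` is `μ` applied to the backward difference
`d_n = e_n - e_{n-1}`, so it suffices to invert `μ` boundedly on `ℓᵖ`. Instead of the geometric
decay of the coefficients of `1 / μ`, we use an explicit polynomial `q` with
`θ = ‖1 - q μ‖_{ℓ¹} < 1` (one for each `k ≤ 6`): from `d = q (μ d) + (1 - q μ) d` and Young's
inequality `‖a ⋆ v‖_p ≤ ‖a‖_{ℓ¹} ‖v‖_p` on every finite window we get
`‖d‖_p ≤ ‖q‖_{ℓ¹} / (1 - θ) · ‖μ d‖_p`, uniformly in `N`, `τ` and `X`.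
-/

open Finset Polynomial
open scoped ENNReal

section PolyConv

variable {R M : Type*}

/-- The `R[X]`-module structure of `ℕ → M` in which `X` acts as the right shift. -/
def polyConv [Semiring R] [AddCommMonoid M] [Module R M] (p : R[X]) (v : ℕ → M) (n : ℕ) : M :=
  ∑ x ∈ antidiagonal n, p.coeff x.1 • v x.2

section Semiring

variable [Semiring R] [AddCommMonoid M] [Module R M]

lemma polyConv_mul (p q : R[X]) (v : ℕ → M) :
    polyConv (p * q) v = polyConv p (polyConv q v) := by
  funext n
  simp only [polyConv, coeff_mul, sum_smul, smul_sum, mul_smul]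
  rw [sum_sigma', sum_sigma']
  exact sum_nbij' (fun x => ⟨(x.2.1, x.2.2 + x.1.2), (x.2.2, x.1.2)⟩)
    (fun x => ⟨(x.1.1 + x.2.1, x.2.2), (x.1.1, x.2.1)⟩)
    (by aesop (add simp add_assoc)) (by aesop (add simp add_assoc)) (by aesop) (by aesop)
    (by aesop)

lemma polyConv_add (p q : R[X]) (v : ℕ → M) :
    polyConv (p + q) v = polyConv p v + polyConv q v := by
  funext n
  simp only [polyConv, coeff_add, add_smul, sum_add_distrib, Pi.add_apply]

lemma polyConv_sum {ι : Type*} (s : Finset ι) (p : ι → R[X]) (v : ℕ → M) :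
    polyConv (∑ i ∈ s, p i) v = ∑ i ∈ s, polyConv (p i) v := by
  funext n
  simp only [polyConv, finsetSum_coeff, sum_smul, Finset.sum_apply]
  exact sum_comm

lemma polyConv_C (a : R) (v : ℕ → M) : polyConv (C a) v = a • v := by
  funext n
  rw [polyConv, Nat.sum_antidiagonal_eq_sum_range_succ_mk, sum_range_succ']
  simp [coeff_C]

lemma polyConv_one (v : ℕ → M) : polyConv (1 : R[X]) v = v := by
  rw [← C_1, polyConv_C, one_smul]

lemma polyConv_X_pow (i : ℕ) (v : ℕ → M) (n : ℕ) :
    polyConv (X ^ i : R[X]) v n = if i ≤ n then v (n - i) else 0 := by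
  rw [polyConv, Nat.sum_antidiagonal_eq_sum_range_succ_mk]
  simp only [coeff_X_pow, ite_smul, one_smul, zero_smul, sum_ite_eq', mem_range]
  congr 1
  simp only [eq_iff_iff]
  omega

lemma polyConv_eq_zero_of_lt {k : ℕ} (p : R[X]) {v : ℕ → M} (hv : ∀ n < k, v n = 0) {n : ℕ}
    (hn : n < k) : polyConv p v n = 0 :=
  sum_eq_zero fun x hx => by
    rw [hv x.2 (by have := mem_antidiagonal.1 hx; omega), smul_zero]

end Semiring

section Ring

variable [Ring R] [AddCommGroup M] [Module R M]

lemma polyConv_sub (p q : R[X]) (v : ℕ → M) :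
    polyConv (p - q) v = polyConv p v - polyConv q v :=
  eq_sub_of_add_eq (by rw [← polyConv_add, sub_add_cancel])

lemma polyConv_sum_C_mul_X_pow (s : Finset ℕ) (c : ℕ → R) {v : ℕ → M} (hv : v 0 = 0) (n : ℕ) :
    polyConv (∑ j ∈ s, C (c j) * X ^ j) v n = ∑ j ∈ s, c j • v (n - j) := by
  simp only [polyConv_sum, Finset.sum_apply, polyConv_mul, polyConv_C, Pi.smul_apply,
    polyConv_X_pow]
  refine sum_congr rfl fun j _ => ?_
  split_ifs with hj
  · rfl
  · rw [Nat.sub_eq_zero_of_le (by omega), hv]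

lemma polyConv_one_sub_X {v : ℕ → M} (hv : v 0 = 0) (n : ℕ) :
    polyConv (1 - X : R[X]) v n = v n - v (n - 1) := by
  rw [polyConv_sub, polyConv_one, Pi.sub_apply, ← pow_one (X : R[X]), polyConv_X_pow]
  split_ifs with hn
  · rfl
  · rw [Nat.sub_eq_zero_of_le (by omega), hv]

end Ring

end PolyConv

def l1Norm {𝕜 : Type*} [NormedRing 𝕜] (p : 𝕜[X]) : ℝ := p.sum fun _ a => ‖a‖

lemma l1Norm_eq_sum_range {𝕜 : Type*} [NormedRing 𝕜] {p : 𝕜[X]} {R : ℕ} (hR : p.natDegree < R) :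
    l1Norm p = ∑ i ∈ range R, ‖p.coeff i‖ :=
  sum_over_range' p (fun _ => norm_zero) R hR

section Truncate

variable (𝕜 : Type*) {M : Type*} [NormedField 𝕜] [NormedAddCommGroup M] [NormedSpace 𝕜 M]
  (P : ℝ≥0∞) [Fact (1 ≤ P)]

def truncate (N : ℕ) : (ℕ → M) →ₗ[𝕜] PiLp P (fun _ : Fin (N + 1) => M) :=
  (WithLp.linearEquiv P 𝕜 (Fin (N + 1) → M)).symm.toLinearMap ∘ₗ
    LinearMap.funLeft 𝕜 M (fun i : Fin (N + 1) => (i : ℕ))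

variable {𝕜 P}

lemma norm_truncate (hP : P ≠ ∞) (N : ℕ) (v : ℕ → M) :
    ‖truncate 𝕜 P N v‖ = (∑ n ∈ range (N + 1), ‖v n‖ ^ P.toReal) ^ (1 / P.toReal) := by
  have hP0 : 0 < P.toReal := ENNReal.toReal_pos (by have := Fact.out (p := 1 ≤ P); positivity) hP
  rw [PiLp.norm_eq_sum hP0, ← Fin.sum_univ_eq_sum_range (fun n => ‖v n‖ ^ P.toReal)]
  rfl

lemma norm_truncate_polyConv_X_pow_le (hP : P ≠ ∞) (N i : ℕ) (v : ℕ → M) :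
    ‖truncate 𝕜 P N (polyConv (X ^ i : 𝕜[X]) v)‖ ≤ ‖truncate 𝕜 P N v‖ := by
  have hP0 : 0 < P.toReal := ENNReal.toReal_pos (by have := Fact.out (p := 1 ≤ P); positivity) hP
  rw [norm_truncate hP, norm_truncate hP]
  refine Real.rpow_le_rpow (by positivity) ?_ (by positivity)
  simp only [polyConv_X_pow]
  rcases le_or_gt i (N + 1) with hi | hi
  · obtain ⟨m, hm⟩ := Nat.exists_eq_add_of_le hi
    rw [hm, sum_range_add, sum_eq_zero fun n hn => ?_, zero_add]
    · simp only [Nat.le_add_right, if_true, Nat.add_sub_cancel_left]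
      exact sum_le_sum_of_subset_of_nonneg (range_mono (by omega)) fun _ _ _ => by positivity
    · rw [if_neg (by simpa using hn), norm_zero, Real.zero_rpow hP0.ne']
  · rw [sum_eq_zero fun n hn => ?_]
    · positivity
    · rw [if_neg (by simp at hn; omega), norm_zero, Real.zero_rpow hP0.ne']

lemma norm_truncate_polyConv_le (hP : P ≠ ∞) (N : ℕ) (p : 𝕜[X]) (v : ℕ → M) :
    ‖truncate 𝕜 P N (polyConv p v)‖ ≤ l1Norm p * ‖truncate 𝕜 P N v‖ := by
  have hp : polyConv p v = ∑ i ∈ p.support, p.coeff i • polyConv (X ^ i : 𝕜[X]) v := by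
    conv_lhs => rw [p.as_sum_support_C_mul_X_pow]
    simp only [polyConv_sum, polyConv_mul, polyConv_C]
  calc ‖truncate 𝕜 P N (polyConv p v)‖
      ≤ ∑ i ∈ p.support, ‖p.coeff i‖ * ‖truncate 𝕜 P N (polyConv (X ^ i : 𝕜[X]) v)‖ := by
        rw [hp, map_sum]
        refine (norm_sum_le _ _).trans_eq (sum_congr rfl fun i _ => ?_)
        rw [map_smul, norm_smul]
    _ ≤ ∑ i ∈ p.support, ‖p.coeff i‖ * ‖truncate 𝕜 P N v‖ := by
        gcongr
        exact norm_truncate_polyConv_X_pow_le hP N i v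
    _ = l1Norm p * ‖truncate 𝕜 P N v‖ := by rw [← sum_mul, l1Norm, sum_def]

theorem norm_truncate_le_of_l1Norm_one_sub_mul_lt_one (hP : P ≠ ∞) (N : ℕ) {μ q : 𝕜[X]}
    (hqμ : l1Norm (1 - q * μ) < 1) (d : ℕ → M) :
    ‖truncate 𝕜 P N d‖
      ≤ l1Norm q / (1 - l1Norm (1 - q * μ)) * ‖truncate 𝕜 P N (polyConv μ d)‖ := by
  have hd : d = polyConv q (polyConv μ d) + polyConv (1 - q * μ) d := by
    rw [← polyConv_mul, ← polyConv_add, add_sub_cancel, polyConv_one]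
  have key : ‖truncate 𝕜 P N d‖ ≤ l1Norm q * ‖truncate 𝕜 P N (polyConv μ d)‖
      + l1Norm (1 - q * μ) * ‖truncate 𝕜 P N d‖ := by
    conv_lhs => rw [hd, map_add]
    exact (norm_add_le _ _).trans (add_le_add (norm_truncate_polyConv_le hP N q _)
      (norm_truncate_polyConv_le hP N _ d))
  rw [div_mul_eq_mul_div, le_div_iff₀ (sub_pos.2 hqμ)]
  linarith

end Truncate

lemma coeff_one_sub_X_pow {R : Type*} [CommRing R] (m i : ℕ) :
    ((1 - X : R[X]) ^ m).coeff i = (-1) ^ i * m.choose i := by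
  have : (1 - X : R[X]) ^ m = ((1 + X) ^ m).comp (C (-1) * X) := by
    simp [sub_eq_add_neg]
  rw [this, comp_C_mul_X_coeff, coeff_one_add_X_pow, mul_comm]

noncomputable def bdfMu (k : ℕ) : ℝ[X] := ∑ ℓ ∈ Icc 1 k, C (ℓ : ℝ)⁻¹ * (1 - X) ^ (ℓ - 1)

lemma coeff_bdfMu (k i : ℕ) :
    (bdfMu k).coeff i = ∑ ℓ ∈ Icc 1 k, (ℓ : ℝ)⁻¹ * ((-1) ^ i * (ℓ - 1).choose i) := by
  simp only [bdfMu, finsetSum_coeff, coeff_C_mul, coeff_one_sub_X_pow]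

lemma natDegree_bdfMu_le (k : ℕ) : (bdfMu k).natDegree ≤ k - 1 := by
  refine natDegree_sum_le_of_forall_le _ _ fun ℓ hℓ => (natDegree_C_mul_le _ _).trans ?_
  have h1 : (1 - X : ℝ[X]).natDegree ≤ 1 := by compute_degree!
  refine (natDegree_pow_le_of_le _ h1).trans ?_
  simp only [mem_Icc] at hℓ
  omega

lemma sum_C_mul_X_pow_eq_one_sub_X_mul_bdfMu {k : ℕ} {δc : ℕ → ℝ}
    (hδ : ∀ ζ : ℂ, ∑ j ∈ range (k + 1), (δc j : ℂ) * ζ ^ j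
        = ∑ ℓ ∈ Icc 1 k, ((ℓ : ℂ))⁻¹ * (1 - ζ) ^ ℓ) :
    ∑ j ∈ range (k + 1), C (δc j) * X ^ j = (1 - X) * bdfMu k := by
  apply map_injective Complex.ofRealHom Complex.ofReal_injective
  refine Polynomial.funext fun ζ => ?_
  simp only [bdfMu, Polynomial.map_sum, Polynomial.map_mul, Polynomial.map_sub, Polynomial.map_pow,
    map_C, map_X, Polynomial.map_one, eval_finsetSum, eval_mul, eval_sub, eval_pow, eval_C,
    eval_X, eval_one, Complex.ofRealHom_eq_coe, Complex.ofReal_inv, Complex.ofReal_natCast, hδ,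
    mul_sum]
  refine sum_congr rfl fun ℓ hℓ => ?_
  rw [mul_left_comm, ← pow_succ', Nat.sub_add_cancel (mem_Icc.1 hℓ).1]

theorem sum_bdf_eq_polyConv_bdfMu {k : ℕ} {δc : ℕ → ℝ}
    (hδ : ∀ ζ : ℂ, ∑ j ∈ range (k + 1), (δc j : ℂ) * ζ ^ j
        = ∑ ℓ ∈ Icc 1 k, ((ℓ : ℂ))⁻¹ * (1 - ζ) ^ ℓ)
    {M : Type*} [AddCommGroup M] [Module ℝ M] {e : ℕ → M} (he : e 0 = 0) (n : ℕ) :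
    ∑ j ∈ range (k + 1), δc j • e (n - j) = polyConv (bdfMu k) (fun m => e m - e (m - 1)) n := by
  rw [← polyConv_sum_C_mul_X_pow _ _ he, sum_C_mul_X_pow_eq_one_sub_X_mul_bdfMu hδ,
    mul_comm, polyConv_mul]
  congr 1
  funext m
  exact polyConv_one_sub_X he m

lemma l1Norm_one_sub_mul_bdfMu_eq_sum_range {k : ℕ} (hk : 1 ≤ k) {q : ℝ[X]} {L : ℕ}
    (hq : q.natDegree ≤ L) :
    l1Norm (1 - q * bdfMu k) = ∑ i ∈ range (L + k), |(1 - q * bdfMu k).coeff i| := by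
  refine l1Norm_eq_sum_range ((natDegree_sub_le _ _).trans_lt ?_)
  have := (natDegree_mul_le (p := q) (q := bdfMu k)).trans (add_le_add hq (natDegree_bdfMu_le k))
  rw [natDegree_one]
  omega

theorem exists_l1Norm_one_sub_mul_bdfMu_lt_one {k : ℕ} (hk1 : 1 ≤ k) (hk6 : k ≤ 6) :
    ∃ q : ℝ[X], l1Norm (1 - q * bdfMu k) < 1 := by
  obtain ⟨q, L, hq, hqμ⟩ : ∃ q : ℝ[X], ∃ L, q.natDegree ≤ L ∧
      ∑ i ∈ range (L + k), |(1 - q * bdfMu k).coeff i| < 1 := by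
    -- each `q` is a rounded truncation of the power series of `1 / bdfMu k`
    interval_cases k <;> [
      refine ⟨1, 0, by compute_degree!, ?_⟩;
      refine ⟨C (1 / 2), 0, by compute_degree!, ?_⟩;
      refine ⟨C (1 / 2), 0, by compute_degree!, ?_⟩;
      refine ⟨C (1 / 2) + C (2 / 5) * X, 1, by compute_degree!, ?_⟩;
      refine ⟨C (2 / 5) + C (1 / 2) * X + C (1 / 5) * X ^ 2, 2, by compute_degree!, ?_⟩;
      refine ⟨C (2 / 5) + C (3 / 5) * X + C (1 / 5) * X ^ 2 - C (1 / 5) * X ^ 3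
        - C (3 / 20) * X ^ 4, 4, by compute_degree!, ?_⟩]
    all_goals
      simp only [coeff_sub, coeff_one, coeff_mul, Nat.sum_antidiagonal_eq_sum_range_succ_mk,
        sum_range_succ, sum_range_zero, coeff_bdfMu, coeff_add, coeff_C, coeff_X_pow, coeff_X]
      norm_num [sum_Icc_succ_top, Nat.choose]
  exact ⟨q, (l1Norm_one_sub_mul_bdfMu_eq_sum_range hk1 hq).trans_lt hqμ⟩

lemma sum_Icc_eq_sum_range_of_eq_zero {β : Type*} [AddCommMonoid β] {k : ℕ} {f : ℕ → β}
    (hf : ∀ n < k, f n = 0) (N : ℕ) : ∑ n ∈ Icc k N, f n = ∑ n ∈ range (N + 1), f n :=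
  sum_subset (fun n hn => by simp only [mem_Icc, mem_range] at hn ⊢; omega)
    fun n _ hn => hf n (by simp only [mem_Icc, mem_range, not_and, not_le] at *; omega)

lemma rpow_mul_sum_norm_smul {ι 𝕜 M : Type*} [NormedField 𝕜] [NormedAddCommGroup M]
    [NormedSpace 𝕜 M] {p τ : ℝ} (hτ : 0 ≤ τ) (a : 𝕜) (s : Finset ι) (w : ι → M) :
    (τ * ∑ n ∈ s, ‖a • w n‖ ^ p) ^ (1 / p)
      = (τ * ‖a‖ ^ p) ^ (1 / p) * (∑ n ∈ s, ‖w n‖ ^ p) ^ (1 / p) := by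
  simp_rw [norm_smul, Real.mul_rpow (norm_nonneg _) (norm_nonneg _)]
  rw [← mul_sum, ← mul_assoc, Real.mul_rpow (by positivity) (sum_nonneg fun _ _ => by positivity)]

/-- **Backward differences are controlled by BDF divided differences in `ℓ^p(X)`.**
For `1 ≤ k ≤ 6` and `1 ≤ p < ∞` there is a constant `C`, depending only on `k` and `p`
(not on `τ`, `N` or the normed space `X`), such that for every sequence `(e_n)` with
`e_0 = ⋯ = e_{k-1} = 0` and the BDF divided differences
`ė_n = (1/τ) ∑_{j=0}^k δ_j e_{n-j}`,
`(τ ∑_{n=k}^N ‖(e_n - e_{n-1})/τ‖^p)^{1/p} ≤ C (τ ∑_{n=k}^N ‖ė_n‖^p)^{1/p}`. -/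
theorem bdf_backward_difference_bound (k : ℕ) (hk1 : 1 ≤ k) (hk6 : k ≤ 6)
    (δc : ℕ → ℝ)
    (hδ : ∀ ζ : ℂ, ∑ j ∈ Finset.range (k + 1), (δc j : ℂ) * ζ ^ j
        = ∑ ℓ ∈ Finset.Icc 1 k, ((ℓ : ℂ))⁻¹ * (1 - ζ) ^ ℓ)
    (p : ℝ) (hp : 1 ≤ p) :
    ∃ C : ℝ, ∀ (X : Type*) [NormedAddCommGroup X] [NormedSpace ℝ X]
      (τ : ℝ), 0 < τ → ∀ (N : ℕ) (e : ℕ → X), (∀ n < k, e n = 0) →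
      (τ * ∑ n ∈ Finset.Icc k N, ‖(1 / τ) • (e n - e (n - 1))‖ ^ p) ^ (1 / p)
      ≤ C * (τ * ∑ n ∈ Finset.Icc k N,
          ‖(1 / τ) • ∑ j ∈ Finset.range (k + 1), δc j • e (n - j)‖ ^ p) ^ (1 / p) := by
  obtain ⟨q, hq⟩ := exists_l1Norm_one_sub_mul_bdfMu_lt_one hk1 hk6
  refine ⟨l1Norm q / (1 - l1Norm (1 - q * bdfMu k)), fun X _ _ τ hτ N e he => ?_⟩
  have hp0 : 0 < p := by linarith
  have : Fact (1 ≤ ENNReal.ofReal p) := ⟨ENNReal.one_le_ofReal.2 hp⟩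
  have hP : ENNReal.ofReal p ≠ ⊤ := ENNReal.ofReal_ne_top
  set d : ℕ → X := fun m => e m - e (m - 1)
  have hd : ∀ n < k, d n = 0 := fun n hn => by
    simp only [d, he n hn, he (n - 1) (by omega), sub_zero]
  have key := norm_truncate_le_of_l1Norm_one_sub_mul_lt_one (𝕜 := ℝ) hP N hq d
  rw [norm_truncate hP, norm_truncate hP, ENNReal.toReal_ofReal hp0.le,
    ← sum_Icc_eq_sum_range_of_eq_zero (k := k) fun n hn => by
      rw [hd n hn, norm_zero, Real.zero_rpow hp0.ne'],
    ← sum_Icc_eq_sum_range_of_eq_zero (k := k) fun n hn => by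
      rw [polyConv_eq_zero_of_lt _ hd hn, norm_zero, Real.zero_rpow hp0.ne']] at key
  simp only [sum_bdf_eq_polyConv_bdfMu hδ (he 0 hk1)]
  rw [rpow_mul_sum_norm_smul hτ.le _ _ d, rpow_mul_sum_norm_smul hτ.le, mul_left_comm]
  exact mul_le_mul_of_nonneg_left key (by positivity)
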